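/- For the norm ‖·‖_P on H ≅ ℝⁿ whose unit ball is the Voronoï region of A_n, the chromatic number of the unit distance graph G(ℝⁿ, ‖·‖_P) equals 2ⁿ. -/

import Mathlib

/-!
Upper bound: round `2x ∈ H` to a point `λ ∈ Aₙ` with `2x - λ` in a half-open Voronoï cell and
colour `x` by the class of `λ` in `Aₙ / 2Aₙ ≅ (ℤ/2)ⁿ`. For two points of the same colour,
`2(x - y) = μ + a - b` with `μ ∈ 2Aₙ` and `a, b` in the cell: if `μ = 0` the tie-breaking in the
cell keeps `‖a - b‖_P < 2`, and otherwise `μ` has entries `≥ 2` and `≤ -2`, which push the norm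
above `2`.

Lower bound: `ℤⁿ` sits in `H` via `u ↦ (u, 0) / 2`, so a colour class is a set `S ⊆ ℤⁿ` with
no differences in `{0,1,2}ⁿ` having an entry `2`, nor in `{-1,0,1}ⁿ` having both signs. Then
`(u, v) ↦ u ± v` is injective on `S × {0,1}ⁿ` for a suitable choice of signs, so `S` fills at most
a fraction `2⁻ⁿ` of a large box, up to boundary effects that vanish as the box grows.
-/
open Set

/-- The hyperplane `H = {x ∈ ℝ^{n+1} : ∑ xᵢ = 0}`. -/
def Hset (n : ℕ) : Set (Fin (n + 1) → ℝ) := {x | ∑ i, x i = 0}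

/-- The norm on `H` whose unit ball is the Voronoï region of `Aₙ`:
`‖x‖_P = max_j x_j - min_i x_i`. -/
noncomputable def AnNorm (n : ℕ) (x : Fin (n + 1) → ℝ) : ℝ :=
  (⨆ i, x i) - (⨅ i, x i)

open Finset

section AnNorm

variable {n : ℕ}

lemma sub_le_anNorm (x : Fin (n + 1) → ℝ) (p q : Fin (n + 1)) : x p - x q ≤ AnNorm n x :=
  sub_le_sub (le_ciSup (Set.finite_range x).bddAbove p) (ciInf_le (Set.finite_range x).bddBelow q)

lemma exists_anNorm_eq (x : Fin (n + 1) → ℝ) : ∃ p q, AnNorm n x = x p - x q := by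
  obtain ⟨p, hp⟩ := exists_eq_ciSup_of_finite (f := x)
  obtain ⟨q, hq⟩ := exists_eq_ciInf_of_finite (f := x)
  exact ⟨p, q, by rw [AnNorm, hp, hq]⟩

lemma anNorm_eq_of_mem_Icc {x : Fin (n + 1) → ℝ} {a b : ℝ} (hx : ∀ i, x i ∈ Icc a b)
    {p q : Fin (n + 1)} (hp : x p = b) (hq : x q = a) : AnNorm n x = b - a := by
  obtain ⟨p', q', h⟩ := exists_anNorm_eq x
  refine le_antisymm ?_ (hp ▸ hq ▸ sub_le_anNorm x p q)
  rw [h]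
  linarith [(hx p').2, (hx q').1]

lemma anNorm_const_mul {c : ℝ} (hc : 0 ≤ c) (x : Fin (n + 1) → ℝ) :
    AnNorm n (fun i => c * x i) = c * AnNorm n x := by
  rw [AnNorm, AnNorm, mul_sub, Real.mul_iSup_of_nonneg hc, Real.mul_iInf_of_nonneg hc]

lemma anNorm_sub_const (x : Fin (n + 1) → ℝ) (c : ℝ) :
    AnNorm n (fun i => x i - c) = AnNorm n x := by
  rw [AnNorm, AnNorm, ← ciSup_sub (Set.finite_range x).bddAbove,
    ← ciInf_sub (Set.finite_range x).bddBelow, sub_sub_sub_cancel_right]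

end AnNorm

section HalfOpenCell

variable {ι : Type*} [LinearOrder ι]

/-- A half-open version of the unit `‖·‖_P`-ball (the Voronoï cell of `Aₙ`), with ties on the
boundary broken by the order of the coordinates: its `Aₙ`-translates tile `H`. -/
def halfOpenCell : Set (ι → ℝ) := {a | ∀ i j, a i - a j ≤ 1 ∧ (a i - a j = 1 → i < j)}

lemma sub_add_sub_lt_two {a b : ι → ℝ} (ha : a ∈ halfOpenCell) (hb : b ∈ halfOpenCell) (i j : ι) :
    a i - a j + (b j - b i) < 2 := by
  obtain ⟨ha₁, ha₂⟩ := ha i j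
  obtain ⟨hb₁, hb₂⟩ := hb j i
  refine lt_of_le_of_ne (by linarith) fun h => ?_
  exact (ha₂ (by linarith)).asymm (hb₂ (by linarith))

lemma exists_card_eq_forall_lt {α β : Type*} [Fintype α] [LinearOrder β] {r : α → β}
    (hr : Function.Injective r) {k : ℕ} (hk : k ≤ Fintype.card α) :
    ∃ C : Finset α, #C = k ∧ ∀ i ∉ C, ∀ j ∈ C, r i < r j := by
  classical
  induction k with
  | zero => exact ⟨∅, rfl, by simp⟩
  | succ k ih =>
    obtain ⟨C, hC, hlt⟩ := ih (by omega)
    have hne : Cᶜ.Nonempty := by rw [← card_pos, card_compl]; omega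
    obtain ⟨m, hm, hmax⟩ := Cᶜ.exists_max_image r hne
    refine ⟨insert m C, by rw [card_insert_of_notMem (mem_compl.1 hm), hC], ?_⟩
    intro i hi j hj
    rw [Finset.mem_insert, not_or] at hi
    rcases Finset.mem_insert.1 hj with rfl | hj
    · exact (hmax i (mem_compl.2 hi.2)).lt_of_ne (hr.ne hi.1)
    · exact hlt i hi.2 j hj

/-- Rounding `z ∈ H` to the lattice: round every coordinate down, then round up the
`-∑ ⌊zᵢ⌋` coordinates with the largest fractional parts. -/
theorem exists_sub_mem_halfOpenCell [Fintype ι] (z : ι → ℝ) (hz : ∑ i, z i = 0) :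
    ∃ l : ι → ℤ, ∑ i, l i = 0 ∧ (fun i => z i - l i) ∈ halfOpenCell := by
  classical
  set k : ℤ := -∑ i, ⌊z i⌋
  have hk : (k : ℝ) = ∑ i, Int.fract (z i) := by
    simp only [k, Int.fract, sum_sub_distrib, hz]
    push_cast
    ring
  have hk₀ : 0 ≤ k := by
    exact_mod_cast hk ▸ sum_nonneg fun i _ => Int.fract_nonneg (z i)
  have hk₁ : k ≤ Fintype.card ι := by
    have : (k : ℝ) ≤ Fintype.card ι := by
      calc (k : ℝ) ≤ ∑ _i : ι, (1 : ℝ) := hk ▸ sum_le_sum fun i _ => (Int.fract_lt_one (z i)).le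
        _ = Fintype.card ι := by simp
    exact_mod_cast this
  obtain ⟨C, hC, hlt⟩ := exists_card_eq_forall_lt (r := fun i => toLex (Int.fract (z i), i))
    (fun i j h => congrArg (fun p => (ofLex p).2) h) (k := k.toNat) (by omega)
  refine ⟨fun i => ⌊z i⌋ + if i ∈ C then 1 else 0, ?_, fun i j => ?_⟩
  · simp [sum_add_distrib, hC, k, Int.toNat_of_nonneg hk₀]
  have hfract : ∀ i, z i - ((⌊z i⌋ + if i ∈ C then 1 else 0 : ℤ) : ℝ) =
      Int.fract (z i) - if i ∈ C then 1 else 0 := by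
    intro i
    rw [Int.fract]
    split_ifs <;> push_cast <;> ring
  simp only [hfract]
  have hi₀ := Int.fract_nonneg (z i)
  have hi₁ := Int.fract_lt_one (z i)
  have hj₀ := Int.fract_nonneg (z j)
  have hj₁ := Int.fract_lt_one (z j)
  by_cases hi : i ∈ C <;> by_cases hj : j ∈ C <;> simp only [hi, hj, if_true, if_false]
  · exact ⟨by linarith, fun h => by linarith⟩
  · exact ⟨by linarith, fun h => by linarith⟩
  · rcases Prod.Lex.toLex_lt_toLex.1 (hlt i hi j hj) with h | ⟨h, hij⟩
    · exact ⟨by linarith, fun h => by linarith⟩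
    · exact ⟨by linarith, fun _ => hij⟩
  · exact ⟨by linarith, fun h => by linarith⟩

end HalfOpenCell

section UpperBound

variable {n : ℕ}

theorem anNorm_intCast_add_sub_ne_two {a b : Fin (n + 1) → ℝ} (ha : a ∈ halfOpenCell)
    (hb : b ∈ halfOpenCell) {μ : Fin (n + 1) → ℤ} (hsum : ∑ i, μ i = 0) (hμ : ∀ i, 2 ∣ μ i) :
    AnNorm n (fun i => μ i + a i - b i) ≠ 2 := by
  intro h
  by_cases hμ₀ : ∀ i, μ i = 0
  · obtain ⟨p, q, hpq⟩ := exists_anNorm_eq (fun i => (μ i : ℝ) + a i - b i)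
    rw [h] at hpq
    simp only [hμ₀, Int.cast_zero, zero_add] at hpq
    linarith [sub_add_sub_lt_two ha hb p q]
  · push Not at hμ₀
    obtain ⟨p, -, hp⟩ := exists_pos_of_sum_zero_of_exists_nonzero (s := univ) μ hsum
      (by simpa using hμ₀)
    obtain ⟨q, -, hq⟩ := exists_pos_of_sum_zero_of_exists_nonzero (s := univ) (-μ)
      (by simp [sum_neg_distrib, hsum]) (by simpa using hμ₀)
    have hpq : (4 : ℝ) ≤ μ p - μ q := by
      obtain ⟨r, hr⟩ := hμ p
      obtain ⟨s, hs⟩ := hμ q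
      have : (4 : ℤ) ≤ μ p - μ q := by simp only [Pi.neg_apply] at hq; omega
      exact_mod_cast this
    have := sub_le_anNorm (fun i => (μ i : ℝ) + a i - b i) p q
    linarith [sub_add_sub_lt_two ha hb q p]

theorem anNorm_sub_ne_one {x y : Fin (n + 1) → ℝ} {l l' : Fin (n + 1) → ℤ}
    (hl : ∑ i, l i = 0) (hl' : ∑ i, l' i = 0)
    (hx : (fun i => 2 * x i - l i) ∈ halfOpenCell) (hy : (fun i => 2 * y i - l' i) ∈ halfOpenCell)
    (hll' : ∀ i : Fin n, (l i.castSucc : ZMod 2) = l' i.castSucc) :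
    AnNorm n (x - y) ≠ 1 := by
  have hdvd : ∀ i : Fin n, 2 ∣ l i.castSucc - l' i.castSucc := fun i =>
    dvd_sub_comm.1 ((ZMod.intCast_eq_intCast_iff_dvd_sub _ _ 2).1 (hll' i))
  have hsum : ∑ i, (l i - l' i) = 0 := by rw [sum_sub_distrib, hl, hl', sub_zero]
  have hdvd_last : 2 ∣ l (Fin.last n) - l' (Fin.last n) := by
    rw [Fin.sum_univ_castSucc, add_eq_zero_iff_neg_eq'] at hsum
    exact dvd_neg.1 (hsum ▸ dvd_sum fun i _ => hdvd i)
  have h := anNorm_intCast_add_sub_ne_two hx hy hsum (Fin.forall_fin_succ'.2 ⟨hdvd, hdvd_last⟩)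
  contrapose! h
  calc AnNorm n _ = AnNorm n (fun i => 2 * (x - y) i) := by
        congr 1; ext i; push_cast [Pi.sub_apply]; ring
    _ = 2 := by rw [anNorm_const_mul zero_le_two, h, mul_one]

theorem exists_coloring_fin_two_pow (n : ℕ) :
    ∃ c : (Fin (n + 1) → ℝ) → Fin (2 ^ n),
      ∀ x ∈ Hset n, ∀ y ∈ Hset n, AnNorm n (x - y) = 1 → c x ≠ c y := by
  choose! l hl_sum hl_cell using fun z : Fin (n + 1) → ℝ => exists_sub_mem_halfOpenCell z
  have hdouble : ∀ x ∈ Hset n, ∑ i, 2 * x i = 0 := fun x hx => by rw [← mul_sum, hx, mul_zero]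
  let e : (Fin n → ZMod 2) ≃ Fin (2 ^ n) := Fintype.equivFinOfCardEq (by simp [ZMod.card])
  refine ⟨fun x => e fun i => (l (fun j => 2 * x j) i.castSucc : ZMod 2), ?_⟩
  intro x hx y hy hxy hc
  exact anNorm_sub_ne_one (hl_sum _ (hdouble x hx)) (hl_sum _ (hdouble y hy))
    (hl_cell _ (hdouble x hx)) (hl_cell _ (hdouble y hy)) (congrFun (e.injective hc)) hxy

end UpperBound

section SparseSet

variable {ι : Type*}

/-- Independence for the two kinds of edges of the unit distance graph on `embed '' ℤⁿ` that the
counting uses: differences in `{0, 1, 2}ⁿ` with an entry `2`, and in `{-1, 0, 1}ⁿ` with entries of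
both signs. -/
def IsSparse (S : Set (ι → ℤ)) : Prop :=
  ∀ y ∈ S, ∀ z ∈ S, (z ≤ y → y ≤ z + 2 → y ≤ z + 1) ∧ (y ≤ z + 1 → z ≤ y + 1 → y ≤ z ∨ z ≤ y)

open Classical in
noncomputable def upperNeighbours (S : Finset (ι → ℤ)) (u : ι → ℤ) : Finset (ι → ℤ) :=
  S.filter fun y => u < y ∧ y ≤ u + 1

open Classical in
noncomputable def step (S : Finset (ι → ℤ)) (u : ι → ℤ) : ι → ℤ :=
  if h : ∃ y ∈ upperNeighbours S u, ∀ z ∈ upperNeighbours S u, y ≤ z then h.choose - u else 0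

lemma mem_upperNeighbours {S : Finset (ι → ℤ)} {u y : ι → ℤ} :
    y ∈ upperNeighbours S u ↔ y ∈ S ∧ u < y ∧ y ≤ u + 1 := by
  classical
  simp [upperNeighbours]

lemma step_eq_zero_of_upperNeighbours_eq_empty {S : Finset (ι → ℤ)} {u : ι → ℤ}
    (h : upperNeighbours S u = ∅) : step S u = 0 := by
  simp [step, h]

lemma step_mem_Icc (S : Finset (ι → ℤ)) (u : ι → ℤ) : step S u ∈ Set.Icc 0 1 := by
  unfold step
  split_ifs with h
  · obtain ⟨-, hu, hy⟩ := mem_upperNeighbours.1 h.choose_spec.1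
    exact ⟨sub_nonneg.2 hu.le, sub_le_iff_le_add'.2 hy⟩
  · exact ⟨le_rfl, zero_le_one⟩

lemma IsSparse.exists_least_upperNeighbours {S : Finset (ι → ℤ)}
    (hS : IsSparse (S : Set (ι → ℤ))) {u : ι → ℤ} (hne : (upperNeighbours S u).Nonempty) :
    ∃ y ∈ upperNeighbours S u, ∀ z ∈ upperNeighbours S u, y ≤ z := by
  obtain ⟨y, hy, hmin⟩ := Finset.exists_minimal hne
  refine ⟨y, hy, fun z hz => ?_⟩
  obtain ⟨hyS, huy, hyu⟩ := mem_upperNeighbours.1 hy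
  obtain ⟨hzS, huz, hzu⟩ := mem_upperNeighbours.1 hz
  rcases (hS y hyS z hzS).2 (hyu.trans (by gcongr)) (hzu.trans (by gcongr)) with h | h
  · exact h
  · exact hmin hz h

lemma IsSparse.step_spec {S : Finset (ι → ℤ)} (hS : IsSparse (S : Set (ι → ℤ))) {u : ι → ℤ}
    (hne : (upperNeighbours S u).Nonempty) :
    u + step S u ∈ S ∧ 0 < step S u ∧ ∀ y ∈ upperNeighbours S u, u + step S u ≤ y := by
  have h := hS.exists_least_upperNeighbours hne
  obtain ⟨hyS, huy, -⟩ := mem_upperNeighbours.1 h.choose_spec.1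
  rw [step, dif_pos h, add_sub_cancel]
  exact ⟨hyS, sub_pos.2 huy, h.choose_spec.2⟩

end SparseSet

lemma le_add_of_add_eq_add {α : Type*} [AddCommGroup α] [PartialOrder α] [IsOrderedAddMonoid α]
    {a b c d e : α} (hc : 0 ≤ c) (hd : d ≤ e) (h : a + c = b + d) : a ≤ b + e :=
  calc a ≤ a + c := le_add_of_nonneg_right hc
    _ = b + d := h
    _ ≤ b + e := by gcongr

section CubeMap

variable {ι : Type*} {S : Finset (ι → ℤ)} {u u' v v' : ι → ℤ}

lemma IsSparse.not_lt_of_add_eq_add (hS : IsSparse (S : Set (ι → ℤ))) (hu' : u' ∈ S)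
    (hv : v ∈ Set.Icc 0 1) (hv' : v' ∈ Set.Icc 0 1) (h : u + v = u' + v')
    (hd : v + step S u ≤ 1) : ¬ u < u' := by
  intro hlt
  have hmem : u' ∈ upperNeighbours S u :=
    mem_upperNeighbours.2 ⟨hu', hlt, le_add_of_add_eq_add hv'.1 hv.2 h.symm⟩
  obtain ⟨-, hpos, hle⟩ := hS.step_spec ⟨u', hmem⟩
  obtain ⟨i, hi⟩ := (Pi.lt_def.1 hpos).2
  have h₁ : u i + v i = u' i + v' i := congrFun h i
  have h₂ : u i + step S u i ≤ u' i := hle u' hmem i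
  have h₃ : v i + step S u i ≤ 1 := hd i
  have h₄ : 0 ≤ v' i := hv'.1 i
  have h₅ : 0 < step S u i := hi
  omega

lemma IsSparse.not_lt_of_sub_eq_sub (hS : IsSparse (S : Set (ι → ℤ))) (hu' : u' ∈ S)
    (hv : v ∈ Set.Icc 0 1) (hv' : v' ∈ Set.Icc 0 1) (h : u - v = u' - v')
    (hd : ¬ v + step S u ≤ 1) : ¬ u < u' := by
  intro hlt
  have h' := sub_eq_sub_iff_add_eq_add.1 h
  have hmem : u' ∈ upperNeighbours S u :=
    mem_upperNeighbours.2 ⟨hu', hlt, le_add_of_add_eq_add hv.1 hv'.2 h'.symm⟩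
  obtain ⟨-, -, hle⟩ := hS.step_spec ⟨u', hmem⟩
  obtain ⟨s, hs⟩ : ∃ s, ¬ v s + step S u s ≤ 1 := by simpa [Pi.le_def] using hd
  have h₁ : u s + v' s = u' s + v s := congrFun h' s
  have h₂ : u s + step S u s ≤ u' s := hle u' hmem s
  have h₃ : step S u s ≤ 1 := (step_mem_Icc S u).2 s
  have h₄ : v s ≤ 1 := hv.2 s
  have h₅ : v' s ≤ 1 := hv'.2 s
  omega

lemma IsSparse.add_ne_sub (hS : IsSparse (S : Set (ι → ℤ))) (hu : u ∈ S) (hu' : u' ∈ S)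
    (hv : v ∈ Set.Icc 0 1) (hv' : v' ∈ Set.Icc 0 1) (hd' : ¬ v' + step S u' ≤ 1) :
    u + v ≠ u' - v' := by
  intro h
  have hu'_eq : u' = u + (v + v') := by rw [← add_assoc, h, sub_add_cancel]
  have hne : (upperNeighbours S u').Nonempty := by
    rw [Finset.nonempty_iff_ne_empty]
    intro h₀
    rw [step_eq_zero_of_upperNeighbours_eq_empty h₀, add_zero] at hd'
    exact hd' hv'.2
  obtain ⟨hyS, -, -⟩ := hS.step_spec hne
  have hd₀ := step_mem_Icc S u'
  have hu_le : u ≤ u' := hu'_eq ▸ le_add_of_nonneg_right (add_nonneg hv.1 hv'.1)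
  have hu'_le : u' ≤ u + 1 := by
    refine (hS u' hu' u hu).1 hu_le ?_
    rw [hu'_eq, ← one_add_one_eq_two]
    gcongr
    exacts [hv.2, hv'.2]
  have hy : u' + step S u' ≤ u + 1 := by
    refine (hS _ hyS u hu).1 (le_add_of_le_of_nonneg hu_le hd₀.1) ?_
    rw [← one_add_one_eq_two, ← add_assoc]
    exact add_le_add hu'_le hd₀.2
  obtain ⟨s, hs⟩ : ∃ s, ¬ v' s + step S u' s ≤ 1 := by simpa [Pi.le_def] using hd'
  have h₁ : u' s + step S u' s ≤ u s + 1 := hy s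
  have h₂ : u' s = u s + (v s + v' s) := congrFun hu'_eq s
  have h₃ : 0 ≤ v s := hv.1 s
  omega

open Classical in
/-- `u + v` can collide with the cube at the next point `u + step S u` of `S` only when `v` meets
that step; `u - v` is used instead then. -/
noncomputable def cubeMap (S : Finset (ι → ℤ)) (p : (ι → ℤ) × (ι → ℤ)) : ι → ℤ :=
  if p.2 + step S p.1 ≤ 1 then p.1 + p.2 else p.1 - p.2

lemma IsSparse.injOn_cubeMap (hS : IsSparse (S : Set (ι → ℤ))) :
    Set.InjOn (cubeMap S) ((S : Set (ι → ℤ)) ×ˢ Set.Icc 0 1) := by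
  rintro ⟨u, v⟩ ⟨hu, hv⟩ ⟨u', v'⟩ ⟨hu', hv'⟩ h
  by_cases hd : v + step S u ≤ 1 <;> by_cases hd' : v' + step S u' ≤ 1 <;>
    simp only [cubeMap, hd, hd', if_true, if_false] at h
  · have huu : u = u' := by
      rcases (hS u hu u' hu').2 (le_add_of_add_eq_add hv.1 hv'.2 h)
        (le_add_of_add_eq_add hv'.1 hv.2 h.symm) with hle | hle
      · exact hle.eq_of_not_lt (hS.not_lt_of_add_eq_add hu' hv hv' h hd)
      · exact (hle.eq_of_not_lt (hS.not_lt_of_add_eq_add hu hv' hv h.symm hd')).symm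
    subst huu
    exact Prod.ext rfl (add_left_cancel h)
  · exact (hS.add_ne_sub hu hu' hv hv' hd' h).elim
  · exact (hS.add_ne_sub hu' hu hv' hv hd h.symm).elim
  · have h' := sub_eq_sub_iff_add_eq_add.1 h
    have huu : u = u' := by
      rcases (hS u hu u' hu').2 (le_add_of_add_eq_add hv'.1 hv.2 h')
        (le_add_of_add_eq_add hv.1 hv'.2 h'.symm) with hle | hle
      · exact hle.eq_of_not_lt (hS.not_lt_of_sub_eq_sub hu' hv hv' h hd)
      · exact (hle.eq_of_not_lt (hS.not_lt_of_sub_eq_sub hu hv' hv h.symm hd')).symm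
    subst huu
    exact Prod.ext rfl (sub_right_inj.1 h)

theorem IsSparse.card_mul_two_pow_le [Fintype ι] [DecidableEq ι]
    (hS : IsSparse (S : Set (ι → ℤ))) {t : Finset (ι → ℤ)}
    (ht : ∀ u ∈ S, ∀ v ∈ Set.Icc (-1) 1, u + v ∈ t) :
    #S * 2 ^ Fintype.card ι ≤ #t := by
  have hcube : #(Finset.Icc (0 : ι → ℤ) 1) = 2 ^ Fintype.card ι := by
    simp [Pi.card_Icc, Int.card_Icc]
  rw [← hcube, ← card_product]
  refine card_le_card_of_injOn (cubeMap S) (fun p hp => ?_) (by simpa using hS.injOn_cubeMap)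
  obtain ⟨hu, hv⟩ := mem_product.1 hp
  rw [Finset.mem_Icc] at hv
  rw [Finset.mem_coe, cubeMap]
  split_ifs
  · exact ht _ hu _ ⟨le_trans (by simp) hv.1, hv.2⟩
  · rw [sub_eq_add_neg]
    exact ht _ hu _ ⟨neg_le_neg hv.2, le_trans (neg_nonpos.2 hv.1) zero_le_one⟩

end CubeMap

section LowerBound

variable {n : ℕ}

noncomputable def centre (x : Fin (n + 1) → ℝ) : Fin (n + 1) → ℝ :=
  fun i => x i - (∑ j, x j) / (n + 1)

lemma centre_mem_Hset (x : Fin (n + 1) → ℝ) : centre x ∈ Hset n := by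
  simp only [Hset, centre, Set.mem_ofPred_eq, sum_sub_distrib, sum_const, card_univ,
    Fintype.card_fin, nsmul_eq_mul]
  push_cast
  field_simp
  ring

lemma anNorm_centre_sub_centre (x y : Fin (n + 1) → ℝ) :
    AnNorm n (centre x - centre y) = AnNorm n (x - y) := by
  rw [← anNorm_sub_const (x - y) ((∑ j, x j) / (n + 1) - (∑ j, y j) / (n + 1))]
  congr 1
  ext i
  simp only [centre, Pi.sub_apply]
  ring

noncomputable def embed (u : Fin n → ℤ) : Fin (n + 1) → ℝ :=
  centre fun i => (Fin.snoc (α := fun _ => ℤ) u 0 i : ℝ) / 2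

lemma anNorm_embed_sub_embed (u v : Fin n → ℤ) :
    AnNorm n (embed u - embed v) =
      AnNorm n fun i => (Fin.snoc (α := fun _ => ℤ) (u - v) 0 i : ℝ) / 2 := by
  rw [embed, embed, anNorm_centre_sub_centre]
  congr 1
  ext i
  induction i using Fin.lastCases <;> simp [sub_div]

lemma anNorm_intCast_div_two_eq_one {w : Fin (n + 1) → ℤ} {a : ℤ}
    (hw : ∀ i, w i ∈ Set.Icc a (a + 2)) {p q : Fin (n + 1)} (hp : w p = a + 2) (hq : w q = a) :
    AnNorm n (fun i => (w i : ℝ) / 2) = 1 := by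
  have hw' : ∀ i, (w i : ℝ) / 2 ∈ Set.Icc ((a : ℝ) / 2) (a / 2 + 1) := fun i => by
    obtain ⟨h₁, h₂⟩ := hw i
    constructor
    · rw [div_le_div_iff_of_pos_right two_pos]; exact_mod_cast h₁
    · have : (w i : ℝ) ≤ a + 2 := by exact_mod_cast h₂
      linarith
  rw [anNorm_eq_of_mem_Icc hw' (p := p) (q := q) (by rw [hp]; push_cast; ring) (by rw [hq])]
  ring

lemma isSparse_of_monochromatic {κ : Type*} {c : (Fin (n + 1) → ℝ) → κ}
    (hc : ∀ x ∈ Hset n, ∀ y ∈ Hset n, AnNorm n (x - y) = 1 → c x ≠ c y)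
    {S : Set (Fin n → ℤ)} {k : κ} (hS : ∀ u ∈ S, c (embed u) = k) : IsSparse S := by
  have hedge : ∀ u ∈ S, ∀ v ∈ S,
      AnNorm n (fun i => (Fin.snoc (α := fun _ => ℤ) (u - v) 0 i : ℝ) / 2) ≠ 1 := by
    intro u hu v hv h
    refine hc _ (centre_mem_Hset _) _ (centre_mem_Hset _) ?_ ((hS u hu).trans (hS v hv).symm)
    rwa [← embed, ← embed, anNorm_embed_sub_embed]
  intro y hy z hz
  constructor
  · intro h₁ h₂
    by_contra h₃
    obtain ⟨j, hj⟩ : ∃ j, ¬ y j ≤ z j + 1 := by simpa [Pi.le_def] using h₃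
    have hw : ∀ i, Fin.snoc (α := fun _ => ℤ) (y - z) 0 i ∈ Set.Icc 0 (0 + 2) :=
      Fin.lastCases (by simp) fun i => by
        have h₁ : z i ≤ y i := h₁ i
        have h₂ : y i ≤ z i + 2 := h₂ i
        rw [Fin.snoc_castSucc, Set.mem_Icc, Pi.sub_apply]
        omega
    refine hedge y hy z hz (anNorm_intCast_div_two_eq_one hw (p := j.castSucc) (q := Fin.last n)
      ?_ (by simp))
    have h₂ : y j ≤ z j + 2 := h₂ j
    rw [Fin.snoc_castSucc, Pi.sub_apply]
    omega
  · intro h₁ h₂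
    by_contra! h₃
    obtain ⟨j, hj⟩ : ∃ j, z j < y j := by simpa [Pi.le_def] using h₃.1
    obtain ⟨j', hj'⟩ : ∃ j, y j < z j := by simpa [Pi.le_def] using h₃.2
    have hw : ∀ i, Fin.snoc (α := fun _ => ℤ) (y - z) 0 i ∈ Set.Icc (-1) (-1 + 2) :=
      Fin.lastCases (by simp) fun i => by
        have h₁ : y i ≤ z i + 1 := h₁ i
        have h₂ : z i ≤ y i + 1 := h₂ i
        rw [Fin.snoc_castSucc, Set.mem_Icc, Pi.sub_apply]
        omega
    refine hedge y hy z hz (anNorm_intCast_div_two_eq_one hw (p := j.castSucc) (q := j'.castSucc)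
      ?_ ?_) <;> rw [Fin.snoc_castSucc, Pi.sub_apply]
    · have h₁ : y j ≤ z j + 1 := h₁ j
      omega
    · have h₂ : z j' ≤ y j' + 1 := h₂ j'
      omega

end LowerBound

open Filter Topology in
lemma le_of_forall_pow_mul_le {n a m d : ℕ} (h : ∀ N : ℕ, N ^ n * a ≤ m * (N + d) ^ n) :
    a ≤ m := by
  have hlim : Tendsto (fun N : ℕ => ((N : ℝ) / (N + d)) ^ n * a) atTop (𝓝 a) := by
    simpa using ((tendsto_natCast_div_add_atTop (d : ℝ)).pow n).mul_const (a : ℝ)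
  refine Nat.cast_le.1 (le_of_tendsto hlim ((eventually_gt_atTop 0).mono fun N hN => ?_))
  rw [div_pow, div_mul_eq_mul_div, div_le_iff₀ (by positivity)]
  exact_mod_cast h N

theorem card_mul_two_pow_le_mul {n : ℕ} {κ : Type*} [Fintype κ] {c : (Fin (n + 1) → ℝ) → κ}
    (hc : ∀ x ∈ Hset n, ∀ y ∈ Hset n, AnNorm n (x - y) = 1 → c x ≠ c y) (N : ℕ) :
    N ^ n * 2 ^ n ≤ Fintype.card κ * (N + 2) ^ n := by
  classical
  set B := Finset.Icc (0 : Fin n → ℤ) (N - 1)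
  have hB : #B = N ^ n := by simp [B, Pi.card_Icc, Int.card_Icc]
  have hB' : #(Finset.Icc (-1 : Fin n → ℤ) N) = (N + 2) ^ n := by
    simp only [Pi.card_Icc, Pi.neg_apply, Pi.one_apply, Pi.natCast_apply, Int.card_Icc,
      prod_const, card_univ, Fintype.card_fin]
    congr 1
  have hfibre : ∀ k, #{u ∈ B | c (embed u) = k} * 2 ^ n ≤ (N + 2) ^ n := fun k => by
    rw [← hB']
    have hS : IsSparse (({u ∈ B | c (embed u) = k} : Finset _) : Set (Fin n → ℤ)) :=
      isSparse_of_monochromatic hc fun u hu => (mem_filter.1 hu).2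
    simpa only [Fintype.card_fin] using hS.card_mul_two_pow_le fun u hu v hv => by
      obtain ⟨hu₀, hu₁⟩ := Finset.mem_Icc.1 (mem_filter.1 hu).1
      exact Finset.mem_Icc.2
        ⟨by simpa using add_le_add hu₀ hv.1, by simpa using add_le_add hu₁ hv.2⟩
  calc N ^ n * 2 ^ n = ∑ k, #{u ∈ B | c (embed u) = k} * 2 ^ n := by
        rw [← hB, card_eq_sum_card_fiberwise (f := fun u => c (embed u)) (t := univ)
          fun _ _ => mem_coe.2 (mem_univ _), sum_mul]
    _ ≤ ∑ _k : κ, (N + 2) ^ n := sum_le_sum fun k _ => hfibre k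
    _ = Fintype.card κ * (N + 2) ^ n := by simp

theorem chromatic_number_voronoi_An (n : ℕ) :
    (∃ c : (Fin (n + 1) → ℝ) → Fin (2 ^ n),
      ∀ x ∈ Hset n, ∀ y ∈ Hset n, AnNorm n (x - y) = 1 → c x ≠ c y) ∧
    (∀ m : ℕ, (∃ c : (Fin (n + 1) → ℝ) → Fin m,
        ∀ x ∈ Hset n, ∀ y ∈ Hset n, AnNorm n (x - y) = 1 → c x ≠ c y) →
      2 ^ n ≤ m) :=
  ⟨exists_coloring_fin_two_pow n, fun _ ⟨_, hc⟩ =>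
    le_of_forall_pow_mul_le fun N => Fintype.card_fin _ ▸ card_mul_two_pow_le_mul hc N⟩
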